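/- (Estimation Lemma) Assume a nested system of fundamental sequences on Γ with norm |·|. If s is a finite set of naturals such that s ∖ {max s} is α-large (equivalently s is (1 ⊎ α)-large), then there is no strictly decreasing function h : s → α satisfying |h(s_i)| ≤ s_i for all i < |s|. -/

import Mathlib

open Ordinal

/-- A system of fundamental sequences on `Γ`: to each ordinal `α ≤ Γ` we associate a
non-decreasing sequence `fs α n` with `sup {fs α n + 1 : n} = α` for `α ≠ 0`, and `fs 0 n = 0`. -/
structure FSSystem (Γ : Ordinal) where
  fs : Ordinal → ℕ → Ordinal
  fs_zero : ∀ n, fs 0 n = 0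
  mono : ∀ α, α ≤ Γ → Monotone (fs α)
  sup_eq : ∀ α, α ≤ Γ → α ≠ 0 → (⨆ n : ℕ, fs α n + 1) = α

/-- The system is nested: it is never the case, for `γ < β ≤ Γ` and `n > 1`,
that `γ > β[n] > γ[n]`. -/
def FSSystem.Nested {Γ : Ordinal} (S : FSSystem Γ) : Prop :=
  ∀ γ β (n : ℕ), γ < β → β ≤ Γ → 1 < n → ¬ (S.fs γ n < S.fs β n ∧ S.fs β n < γ)

/-- Iterated evaluation `α[s_0][s_1]…[s_{m-1}]` along a list. -/
def FSSystem.evalL {Γ : Ordinal} (S : FSSystem Γ) (α : Ordinal) (s : List ℕ) : Ordinal :=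
  s.foldl S.fs α

/-- `α ⇒_n β`: `β` is obtained from `α` by finitely many applications of `δ ↦ δ[n]`. -/
def FSSystem.Reaches {Γ : Ordinal} (S : FSSystem Γ) (n : ℕ) (α β : Ordinal) : Prop :=
  ∃ k : ℕ, (fun δ => S.fs δ n)^[k] α = β

/-- The norm `|α| = min {n > 1 : Γ ⇒_n α}`. -/
noncomputable def FSSystem.norm {Γ : Ordinal} (S : FSSystem Γ) (α : Ordinal) : ℕ :=
  sInf {n : ℕ | 1 < n ∧ S.Reaches n Γ α}

/-- Iterated evaluation `α[s]` along the increasing enumeration of a finite set. -/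
def FSSystem.evalF {Γ : Ordinal} (S : FSSystem Γ) (α : Ordinal) (s : Finset ℕ) : Ordinal :=
  S.evalL α (s.sort (· ≤ ·))

/-! Nestedness makes the norm good: an ordinal reached from `Γ` by steps `γ ↦ γ[n]` cannot jump
over `δ[n]` for any `δ` above it, reachability with parameter `n` persists for larger parameters,
and every `β ≤ Γ` is reachable. Goodness turns `h(s_i) < α[s_0]…[s_{i-1}]` and `|h(s_i)| ≤ s_i`
into `h(s_i) ≤ α[s_0]…[s_i]`, hence `h(s_{i+1}) < α[s_0]…[s_i]`; at the last element this
contradicts `α[s ∖ {max s}] = 0`. -/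

namespace FSSystem

variable {Γ : Ordinal} (S : FSSystem Γ)

lemma fs_lt {δ : Ordinal} (hδ : δ ≤ Γ) (h0 : δ ≠ 0) (n : ℕ) : S.fs δ n < δ := by
  have h := le_ciSup (f := fun n => S.fs δ n + 1) bddAbove_of_small n
  rw [S.sup_eq δ hδ h0] at h
  exact Order.add_one_le_iff.mp h

lemma fs_le {δ : Ordinal} (hδ : δ ≤ Γ) (n : ℕ) : S.fs δ n ≤ δ := by
  rcases eq_or_ne δ 0 with rfl | h0
  · rw [S.fs_zero]
  · exact (S.fs_lt hδ h0 n).le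

lemma exists_le_fs_of_lt {β δ : Ordinal} (hβδ : β < δ) (hδ : δ ≤ Γ) : ∃ n, β ≤ S.fs δ n := by
  rw [← S.sup_eq δ hδ (ne_bot_of_gt hβδ), lt_ciSup_iff bddAbove_of_small] at hβδ
  simpa only [Order.lt_add_one_iff] using hβδ

lemma Reaches.le_top {n : ℕ} {β : Ordinal} (h : S.Reaches n Γ β) : β ≤ Γ := by
  obtain ⟨k, rfl⟩ := h
  induction k with
  | zero => exact le_rfl
  | succ k ih =>
    rw [Function.iterate_succ_apply']
    exact (S.fs_le ih n).trans ih

lemma Reaches.fs {n : ℕ} {β : Ordinal} (h : S.Reaches n Γ β) : S.Reaches n Γ (S.fs β n) := by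
  obtain ⟨k, rfl⟩ := h
  exact ⟨k + 1, Function.iterate_succ_apply' _ _ _⟩

/-- A step `γ ↦ γ[n]` from `γ > δ` that lands below `δ` cannot overtake `δ[n]`: nestedness
forbids `δ[n] < γ[n] < δ`. -/
lemma Reaches.le_fs_of_lt (hN : S.Nested) {n : ℕ} (hn : 1 < n) {β δ : Ordinal}
    (hr : S.Reaches n Γ β) (hβδ : β < δ) (hδ : δ ≤ Γ) : β ≤ S.fs δ n := by
  obtain ⟨k, rfl⟩ := hr
  induction k generalizing δ with
  | zero => exact absurd hδ hβδ.not_ge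
  | succ k ih =>
    rw [Function.iterate_succ_apply'] at hβδ ⊢
    set γ := (fun δ => S.fs δ n)^[k] Γ
    have hγ : γ ≤ Γ := Reaches.le_top S ⟨k, rfl⟩
    rcases lt_trichotomy γ δ with hγδ | rfl | hδγ
    · exact (S.fs_le hγ n).trans (ih hδ hγδ)
    · exact le_rfl
    · exact not_lt.mp fun h => hN δ γ n hδγ hγ hn ⟨h, hβδ⟩

lemma Reaches.of_le_of_forall_le_fs {m : ℕ} {β γ : Ordinal}
    (hβ : ∀ δ, β < δ → δ ≤ Γ → β ≤ S.fs δ m) (hγ : S.Reaches m Γ γ) (hβγ : β ≤ γ) :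
    S.Reaches m Γ β := by
  induction γ using WellFoundedLT.induction with
  | _ γ ih =>
    rcases hβγ.eq_or_lt with rfl | hlt
    · exact hγ
    · exact ih _ (S.fs_lt hγ.le_top (ne_bot_of_gt hlt) m) hγ.fs (hβ γ hlt hγ.le_top)

/-- By goodness, the `m`-chain from an `m`-reachable `γ` cannot jump over `γ[n]`. -/
lemma Reaches.mono (hN : S.Nested) {n m : ℕ} (hn : 1 < n) (hnm : n ≤ m) {β : Ordinal}
    (h : S.Reaches n Γ β) : S.Reaches m Γ β := by
  obtain ⟨k, rfl⟩ := h
  induction k with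
  | zero => exact ⟨0, rfl⟩
  | succ k ih =>
    have hr : S.Reaches n Γ ((fun δ => S.fs δ n)^[k + 1] Γ) := ⟨k + 1, rfl⟩
    rw [Function.iterate_succ_apply'] at hr ⊢
    refine Reaches.of_le_of_forall_le_fs S (fun δ hlt hδ => ?_) ih (S.fs_le ih.le_top n)
    exact (hr.le_fs_of_lt S hN hn hlt hδ).trans (S.mono δ hδ hnm)

lemma exists_reaches (hN : S.Nested) {β : Ordinal} (hβ : β ≤ Γ) :
    ∃ n, 1 < n ∧ S.Reaches n Γ β := by
  suffices ∀ δ n, 1 < n → S.Reaches n Γ δ → β ≤ δ → ∃ n, 1 < n ∧ S.Reaches n Γ β from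
    this Γ 2 one_lt_two ⟨0, rfl⟩ hβ
  intro δ
  induction δ using WellFoundedLT.induction with
  | _ δ ih =>
    intro n hn hr hβδ
    rcases hβδ.eq_or_lt with rfl | hlt
    · exact ⟨n, hn, hr⟩
    obtain ⟨k, hk⟩ := S.exists_le_fs_of_lt hlt hr.le_top
    have hm : 1 < max n k := hn.trans_le (le_max_left n k)
    have hrm : S.Reaches (max n k) Γ δ := hr.mono S hN hn (le_max_left n k)
    exact ih _ (S.fs_lt hr.le_top (ne_bot_of_gt hlt) _) _ hm hrm.fs
      (hk.trans (S.mono δ hr.le_top (le_max_right n k)))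

lemma le_fs_of_norm_le (hN : S.Nested) {β δ : Ordinal} (hβδ : β < δ) (hδ : δ ≤ Γ) {n : ℕ}
    (hn : S.norm β ≤ n) : β ≤ S.fs δ n := by
  obtain ⟨hnorm, hr⟩ : 1 < S.norm β ∧ S.Reaches (S.norm β) Γ β :=
    Nat.sInf_mem (S.exists_reaches hN (hβδ.le.trans hδ))
  exact (hr.le_fs_of_lt S hN hnorm hβδ hδ).trans (S.mono δ hδ hn)

lemma evalL_dropLast_ne_zero (hN : S.Nested) (h : ℕ → Ordinal) (a : ℕ) (l : List ℕ)
    {β : Ordinal} (hβ : β ≤ Γ) (ha : h a < β)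
    (hdec : (a :: l).Pairwise fun x y => h y < h x) (hnorm : ∀ b ∈ a :: l, S.norm (h b) ≤ b) :
    S.evalL β (a :: l).dropLast ≠ 0 := by
  induction l generalizing a β with
  | nil => exact ne_bot_of_gt ha
  | cons b l ih =>
    have hb : h b < S.fs β a :=
      (List.rel_of_pairwise_cons hdec List.mem_cons_self).trans_le
        (S.le_fs_of_norm_le hN ha hβ (hnorm a List.mem_cons_self))
    exact ih b ((S.fs_le hβ a).trans hβ) hb (List.pairwise_cons.mp hdec).2
      fun c hc => hnorm c (List.mem_cons_of_mem a hc)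

end FSSystem

/-- Estimation Lemma: in a nested system, if `s ∖ {max s}` is `α`-large then there is no
strictly decreasing `h : s → α` with `|h(s_i)| ≤ s_i` for all `i`. -/
theorem estimation_lemma {Γ : Ordinal} (S : FSSystem Γ) (hN : S.Nested)
    (α : Ordinal) (hα : α ≤ Γ) (s : Finset ℕ) (hne : s.Nonempty)
    (hlarge : S.evalL α ((s.sort (· ≤ ·)).dropLast) = 0) :
    ¬ ∃ h : ℕ → Ordinal,
        (∀ m ∈ s, h m < α) ∧
        (∀ m ∈ s, ∀ m' ∈ s, m < m' → h m' < h m) ∧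
        (∀ m ∈ s, S.norm (h m) ≤ m) := by
  rintro ⟨h, hlt, hdec, hnorm⟩
  obtain ⟨a, l, hl⟩ := List.exists_cons_of_ne_nil (l := s.sort (· ≤ ·))
    (List.ne_nil_of_length_pos (by rwa [Finset.length_sort, Finset.card_pos]))
  have hmem : ∀ x ∈ a :: l, x ∈ s := fun x hx => (Finset.mem_sort _).mp (hl ▸ hx)
  have hpair : (a :: l).Pairwise fun x y => h y < h x :=
    (hl ▸ s.sortedLT_sort.pairwise).imp_of_mem fun hx hy hxy =>
      hdec _ (hmem _ hx) _ (hmem _ hy) hxy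
  exact S.evalL_dropLast_ne_zero hN h a l hα (hlt a (hmem a List.mem_cons_self)) hpair
    (fun b hb => hnorm b (hmem b hb)) (hl ▸ hlarge)
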